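/- For every real ζ > 0, one has e^{2√(2/π)·ζ} < Φ(ζ) / (1 - Φ(ζ)), where Φ is the standard normal cumulative distribution function. -/

import Mathlib

open MeasureTheory ProbabilityTheory

/-- The standard normal cumulative distribution function. -/
noncomputable def stdNormalCDF (s : ℝ) : ℝ := (gaussianReal 0 1 (Set.Iic s)).toReal

/-!
With `c = 2√(2/π)` and `σ` the logistic sigmoid, `e^{cζ} < Φ(ζ)/(1 - Φ(ζ))` is equivalent to
`σ(cζ) < Φ(ζ)`. Both `Φ` and `σ(c ·)` equal `1/2` at `0` and tend to `1` at `+∞`, so it suffices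
that the derivative `φ(t) - c σ'(ct)` of their difference is first positive and then negative on
`(0, ∞)`. The choice of `c` makes the two densities agree at `0`, and the sign of their difference
is that of `w(t) = log (φ(t) / (c σ'(ct)))`. Now `w(0) = w'(0) = 0` and `w''(t) = 2c² σ'(ct) - 1`
is decreasing on `[0, ∞)`; by the mean value theorem such a single sign change passes from `w''`
to `w'` and to `w`.
-/

open Real Set Filter Topology

/-- On `(0, ∞)`, `g` is positive up to some point and negative after it (either part may be
empty): once `g` is nonpositive it stays negative. -/
def PosThenNeg (g : ℝ → ℝ) : Prop :=
  ∀ ⦃a b : ℝ⦄, 0 < a → a < b → g a ≤ 0 → g b < 0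

namespace PosThenNeg

variable {f f' g k φ : ℝ → ℝ}

lemma of_strictAntiOn (hg : StrictAntiOn g (Ioi 0)) : PosThenNeg g :=
  fun _ _ ha hab hga => (hg ha (ha.trans hab) hab).trans_le hga

lemma pos_mul (hk : ∀ t, 0 < t → 0 < k t) (hg : PosThenNeg g) :
    PosThenNeg fun t => k t * g t := by
  intro a b ha hab hga
  have hga' : g a ≤ 0 := nonpos_of_mul_nonpos_right hga (hk a ha)
  exact mul_neg_of_pos_of_neg (hk b (ha.trans hab)) (hg ha hab hga')

lemma strictMono_comp (hφ : StrictMono φ) (hφ0 : φ 0 = 0) (hg : PosThenNeg g) :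
    PosThenNeg fun t => φ (g t) := by
  intro a b ha hab hga
  rw [← hφ0] at hga ⊢
  exact hφ (hg ha hab (hφ.le_iff_le.mp hga))

lemma strictAntiOn_Ici (hf : ∀ t, HasDerivAt f (f' t) t) (hf' : PosThenNeg f')
    {a : ℝ} (ha : 0 < a) (hfa : f' a ≤ 0) : StrictAntiOn f (Ici a) := by
  refine strictAntiOn_of_deriv_neg (convex_Ici a)
    (fun t _ => (hf t).continuousAt.continuousWithinAt) fun t ht => ?_
  rw [interior_Ici] at ht
  rw [(hf t).deriv]
  exact hf' ha ht hfa

lemma of_hasDerivAt (hf : ∀ t, HasDerivAt f (f' t) t) (hf0 : f 0 = 0) (hf' : PosThenNeg f') :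
    PosThenNeg f := by
  intro a b ha hab hfa
  obtain ⟨ξ, ⟨hξ, hξa⟩, hslope⟩ := exists_hasDerivAt_eq_slope f f' ha
    (fun t _ => (hf t).continuousAt.continuousWithinAt) (fun t _ => hf t)
  have hf'ξ : f' ξ ≤ 0 := by
    rw [hslope, hf0, sub_zero, sub_zero]
    exact div_nonpos_of_nonpos_of_nonneg hfa ha.le
  have := strictAntiOn_Ici hf hf' hξ hf'ξ (mem_Ici.mpr hξa.le)
    (mem_Ici.mpr (hξa.trans hab).le) hab
  linarith

lemma pos_of_tendsto_zero (hf : ∀ t, HasDerivAt f (f' t) t) (hf0 : f 0 = 0)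
    (hlim : Tendsto f atTop (𝓝 0)) (hf' : PosThenNeg f') {t : ℝ} (ht : 0 < t) : 0 < f t := by
  by_cases hinc : ∀ s ∈ Ioo 0 t, 0 < f' s
  · have hmono : StrictMonoOn f (Icc 0 t) := strictMonoOn_of_deriv_pos (convex_Icc 0 t)
      (fun s _ => (hf s).continuousAt.continuousWithinAt)
      (fun s hs => by rw [interior_Icc] at hs; rw [(hf s).deriv]; exact hinc s hs)
    simpa [hf0] using hmono (left_mem_Icc.mpr ht.le) (right_mem_Icc.mpr ht.le) ht
  · push Not at hinc
    obtain ⟨a, ⟨ha, hat⟩, hfa⟩ := hinc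
    have hanti := strictAntiOn_Ici hf hf' ha hfa
    have hlim_le : 0 ≤ f (t + 1) := le_of_tendsto hlim <|
      (eventually_ge_atTop (t + 1)).mono fun s hs => hanti.antitoneOn
        (mem_Ici.mpr (by linarith)) (mem_Ici.mpr (by linarith)) hs
    have := hanti (mem_Ici.mpr hat.le) (mem_Ici.mpr (by linarith)) (lt_add_one t)
    linarith

end PosThenNeg

lemma hasDerivAt_integral_Iic {f : ℝ → ℝ} (hf : Integrable f) (hfc : Continuous f) (x : ℝ) :
    HasDerivAt (fun y => ∫ t in Iic y, f t) (f x) x := by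
  have hsplit :
      (fun y => ∫ t in Iic y, f t) = fun y => (∫ t in Iic 0, f t) + ∫ t in 0..y, f t := by
    funext y
    rw [← intervalIntegral.integral_Iic_sub_Iic hf.integrableOn hf.integrableOn]
    ring
  rw [hsplit]
  exact (intervalIntegral.integral_hasDerivAt_right hf.intervalIntegrable
    hfc.aestronglyMeasurable.stronglyMeasurableAtFilter hfc.continuousAt).const_add _

lemma stdNormalCDF_eq_measureReal (x : ℝ) : stdNormalCDF x = (gaussianReal 0 1).real (Iic x) := rfl

lemma stdNormalCDF_eq_integral (x : ℝ) : stdNormalCDF x = ∫ t in Iic x, gaussianPDFReal 0 1 t := by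
  rw [stdNormalCDF, gaussianReal_apply_eq_integral 0 one_ne_zero,
    ENNReal.toReal_ofReal (integral_nonneg (gaussianPDFReal_nonneg 0 1))]

lemma hasDerivAt_stdNormalCDF (x : ℝ) : HasDerivAt stdNormalCDF (gaussianPDFReal 0 1 x) x := by
  have hc : Continuous (gaussianPDFReal 0 1) := by rw [gaussianPDFReal_def]; fun_prop
  simpa only [← stdNormalCDF_eq_integral] using
    hasDerivAt_integral_Iic (integrable_gaussianPDFReal 0 1) hc x

lemma tendsto_stdNormalCDF_atTop : Tendsto stdNormalCDF atTop (𝓝 1) := by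
  convert tendsto_cdf_atTop (gaussianReal 0 1) using 1
  funext x
  rw [cdf_eq_real, stdNormalCDF_eq_measureReal]

lemma one_sub_stdNormalCDF (x : ℝ) : 1 - stdNormalCDF x = (gaussianReal 0 1).real (Ioi x) := by
  rw [stdNormalCDF_eq_measureReal, ← compl_Iic, probReal_compl_eq_one_sub measurableSet_Iic]

lemma stdNormalCDF_lt_one (x : ℝ) : stdNormalCDF x < 1 := by
  have hpos : gaussianReal 0 1 (Ioi x) ≠ 0 := fun h => by
    simpa using gaussianReal_absolutelyContinuous' 0 one_ne_zero h
  have := ENNReal.toReal_pos hpos (measure_ne_top _ _)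
  rw [← measureReal_def, ← one_sub_stdNormalCDF] at this
  linarith

lemma stdNormalCDF_zero : stdNormalCDF 0 = 2⁻¹ := by
  have hsymm : (gaussianReal 0 1).real (Iic 0) = (gaussianReal 0 1).real (Ioi 0) :=
    calc (gaussianReal 0 1).real (Iic 0)
        = ((gaussianReal 0 1).map fun x => -x).real (Iic 0) := by
          rw [gaussianReal_map_neg, neg_zero]
      _ = (gaussianReal 0 1).real (Ici 0) := by
          rw [map_measureReal_apply measurable_neg measurableSet_Iic, neg_preimage, neg_Iic,
            neg_zero]
      _ = (gaussianReal 0 1).real (Ioi 0) := by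
          have := nullSingletonClass_gaussianReal (μ := 0) one_ne_zero
          exact measureReal_congr Ioi_ae_eq_Ici.symm
  have := one_sub_stdNormalCDF 0
  rw [← hsymm, ← stdNormalCDF_eq_measureReal] at this
  linarith

lemma sigmoid_mul_one_sub_pos (x : ℝ) : 0 < sigmoid x * (1 - sigmoid x) :=
  mul_pos (sigmoid_pos x) (sub_pos.mpr (sigmoid_lt_one x))

lemma hasDerivAt_sigmoid_mul_one_sub (x : ℝ) :
    HasDerivAt (fun y => sigmoid y * (1 - sigmoid y))
      (sigmoid x * (1 - sigmoid x) * (1 - 2 * sigmoid x)) x := by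
  have h := hasDerivAt_sigmoid x
  exact (h.mul (h.const_sub 1)).congr_deriv (by ring)

lemma strictAntiOn_sigmoid_mul_one_sub :
    StrictAntiOn (fun x => sigmoid x * (1 - sigmoid x)) (Ici 0) := by
  intro x hx y _ hxy
  have hhalf : 2⁻¹ ≤ sigmoid x := sigmoid_zero ▸ sigmoid_le hx
  have hlt := sigmoid_lt hxy
  dsimp only
  nlinarith

/-- `log (e^{-t²/2} / (4 σ'(ct)))` with `σ' = σ (1 - σ)`: the log-ratio of the standard normal
density to the density of `σ (c ·)`, both rescaled to take the value `1` at `0`. -/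
noncomputable def logDensityRatio (c t : ℝ) : ℝ :=
  -t ^ 2 / 2 - log (4 * (sigmoid (c * t) * (1 - sigmoid (c * t))))

lemma logDensityRatio_zero (c : ℝ) : logDensityRatio c 0 = 0 := by
  norm_num [logDensityRatio]

lemma hasDerivAt_logDensityRatio (c t : ℝ) :
    HasDerivAt (logDensityRatio c) (c * (2 * sigmoid (c * t) - 1) - t) t := by
  have hs := sigmoid_mul_one_sub_pos (c * t)
  have hsq : HasDerivAt (fun t : ℝ => -t ^ 2 / 2) (-t) t :=
    ((hasDerivAt_pow 2 t).fun_neg.div_const 2).congr_deriv (by push_cast; ring)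
  have hlog : HasDerivAt (fun t => log (4 * (sigmoid (c * t) * (1 - sigmoid (c * t)))))
      (4 * (sigmoid (c * t) * (1 - sigmoid (c * t)) * (1 - 2 * sigmoid (c * t)) * c) /
        (4 * (sigmoid (c * t) * (1 - sigmoid (c * t))))) t :=
    (((hasDerivAt_sigmoid_mul_one_sub (c * t)).comp t (hasDerivAt_const_mul c)).const_mul
      4).log (by positivity)
  refine (hsq.sub hlog).congr_deriv ?_
  rw [mul_div_mul_left _ _ four_ne_zero, mul_assoc, mul_div_cancel_left₀ _ hs.ne']
  ring

lemma hasDerivAt_deriv_logDensityRatio (c t : ℝ) :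
    HasDerivAt (fun t => c * (2 * sigmoid (c * t) - 1) - t)
      (2 * c ^ 2 * (sigmoid (c * t) * (1 - sigmoid (c * t))) - 1) t := by
  have h := (((hasDerivAt_sigmoid (c * t)).comp t (hasDerivAt_const_mul c)).const_mul
    2).sub_const 1 |>.const_mul c |>.sub (hasDerivAt_id t)
  exact h.congr_deriv (by ring)

lemma posThenNeg_logDensityRatio {c : ℝ} (hc : 0 < c) : PosThenNeg (logDensityRatio c) := by
  refine PosThenNeg.of_hasDerivAt (hasDerivAt_logDensityRatio c) (logDensityRatio_zero c) ?_
  refine PosThenNeg.of_hasDerivAt (hasDerivAt_deriv_logDensityRatio c) (by simp) ?_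
  refine PosThenNeg.of_strictAntiOn fun x hx y hy hxy => ?_
  have hσ' := strictAntiOn_sigmoid_mul_one_sub (mem_Ici.mpr (mul_pos hc hx).le)
    (mem_Ici.mpr (mul_pos hc hy).le) (mul_lt_mul_of_pos_left hxy hc)
  exact sub_lt_sub_right (mul_lt_mul_of_pos_left hσ' (by positivity)) 1

local notation "κ" => 2 * √(2 / π)

lemma two_mul_sqrt_two_div_pi : 2 * √(2 / π) = 4 * (√(2 * π))⁻¹ := by
  rw [sqrt_div' _ pi_pos.le, sqrt_mul zero_le_two]
  field_simp
  norm_num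

lemma gaussianPDFReal_sub_logistic (t : ℝ) :
    gaussianPDFReal 0 1 t - κ * (sigmoid (κ * t) * (1 - sigmoid (κ * t))) =
      (√(2 * π))⁻¹ * exp (-t ^ 2 / 2) * (1 - exp (-logDensityRatio κ t)) := by
  have hs := sigmoid_mul_one_sub_pos (κ * t)
  have hexp : exp (-logDensityRatio κ t) =
      exp (t ^ 2 / 2) * (4 * (sigmoid (κ * t) * (1 - sigmoid (κ * t)))) := by
    rw [logDensityRatio, show ∀ a b : ℝ, -(-a / 2 - b) = a / 2 + b from fun a b => by ring,
      exp_add, exp_log (by positivity)]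
  have hcancel : exp (-t ^ 2 / 2) * exp (t ^ 2 / 2) = 1 := by
    rw [← exp_add, neg_div, neg_add_cancel, exp_zero]
  rw [hexp, gaussianPDFReal, two_mul_sqrt_two_div_pi]
  simp only [NNReal.coe_one, mul_one, sub_zero]
  linear_combination (4 * (√(2 * π))⁻¹ *
    (sigmoid (4 * (√(2 * π))⁻¹ * t) * (1 - sigmoid (4 * (√(2 * π))⁻¹ * t)))) * hcancel

lemma sigmoid_lt_stdNormalCDF {t : ℝ} (ht : 0 < t) : sigmoid (κ * t) < stdNormalCDF t := by
  have hc : 0 < κ := by have := pi_pos; positivity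
  have hderiv (s : ℝ) : HasDerivAt (fun s => stdNormalCDF s - sigmoid (κ * s))
      ((√(2 * π))⁻¹ * exp (-s ^ 2 / 2) * (1 - exp (-logDensityRatio κ s))) s :=
    ((hasDerivAt_stdNormalCDF s).sub ((hasDerivAt_sigmoid _).comp s (hasDerivAt_const_mul _))
      ).congr_deriv (by rw [← gaussianPDFReal_sub_logistic]; ring)
  have hsign : PosThenNeg fun s =>
      (√(2 * π))⁻¹ * exp (-s ^ 2 / 2) * (1 - exp (-logDensityRatio κ s)) := by
    refine PosThenNeg.pos_mul (fun s _ => by have := pi_pos; positivity) ?_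
    exact (posThenNeg_logDensityRatio hc).strictMono_comp (φ := fun x => 1 - exp (-x))
      (fun a b hab => by simpa using exp_lt_exp.mpr (neg_lt_neg hab)) (by simp)
  have hlim : Tendsto (fun s => stdNormalCDF s - sigmoid (κ * s)) atTop (𝓝 0) := by
    simpa using tendsto_stdNormalCDF_atTop.sub
      (tendsto_sigmoid_atTop.comp (tendsto_id.const_mul_atTop hc))
  have := PosThenNeg.pos_of_tendsto_zero hderiv (by simp [stdNormalCDF_zero]) hlim hsign ht
  linarith

lemma exp_lt_div_one_sub_of_sigmoid_lt {x p : ℝ} (h : sigmoid x < p) (hp : p < 1) :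
    exp x < p / (1 - p) := by
  have key : sigmoid x * (exp x + 1) = exp x := by
    rw [sigmoid_def, exp_neg]
    field_simp
  rw [lt_div_iff₀ (sub_pos.mpr hp)]
  nlinarith [mul_lt_mul_of_pos_right h (by positivity : 0 < exp x + 1)]

/-- For every `ζ > 0`, `e^{2√(2/π) ζ} < Φ(ζ)/(1 - Φ(ζ))`. -/
theorem stmt_12 (ζ : ℝ) (hζ : 0 < ζ) :
    Real.exp (2 * Real.sqrt (2 / Real.pi) * ζ) < stdNormalCDF ζ / (1 - stdNormalCDF ζ) :=
  exp_lt_div_one_sub_of_sigmoid_lt (sigmoid_lt_stdNormalCDF hζ) (stdNormalCDF_lt_one ζ)
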